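/- arXiv:2310.03243 — 2 statements merged into one kernel-verified Lean document; each statement's English description precedes it below -/
import Mathlib

section
/- For every time index t ≥ 1, the ℓ1-norm of the network output satisfies Σ_{j=1}^{L_H} |O_t(j)| ≤ t^H · (Π_{k=1}^{H} r_{w_k}) · (Π_{k=1}^{H−1} r_{v_k})^{t−1} · E^{t(H−1)+1}. -/
/-!
Write `W_h = r_{w_1} ⋯ r_{w_h}` and `V_h = r_{v_1} ⋯ r_{v_h}`. A sparse matrix with entries
bounded by `E` maps a vector with entries bounded by `M` to one of ℓ¹-norm at most `nnz · E · M`,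
and the activations do not increase absolute values. Hence the entry bounds `B t h` on `z_t^h`
satisfy `B (t+1) (h+1) ≤ r_{w_{h+1}} E B (t+1) h + r_{v_{h+1}} E B t (h+1)`, and
`B t h = t^h W_h V_h^(t-1) E^(t h)` solves this recursion because
`(t+1)^h + t^(h+1) ≤ (t+1)^(h+1)`. One more sparse layer gives the output bound.
-/

open Finset

/-- Number of nonzero entries of a matrix. -/
noncomputable def nnz {m n : Type*} [Fintype m] [Fintype n] (A : Matrix m n ℝ) : ℕ :=
  Nat.card {p : m × n // A p.1 p.2 ≠ 0}

/-- One time-step of the RNN: given the previous time slice `prev` of hidden states and the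
current input `xt`, compute the hidden states of all layers at the current time. -/
noncomputable def zLayer (L : ℕ → ℕ)
    (w : (h : ℕ) → Matrix (Fin (L h)) (Fin (L (h - 1))) ℝ)
    (v : (h : ℕ) → Matrix (Fin (L h)) (Fin (L h)) ℝ)
    (ψ : ℕ → ℝ → ℝ)
    (prev : (h : ℕ) → Fin (L h) → ℝ) (xt : Fin (L 0) → ℝ) :
    (h : ℕ) → Fin (L h) → ℝ
  | 0 => xt
  | h + 1 => fun j =>
      ψ (h + 1) ((w (h + 1)).mulVec (zLayer L w v ψ prev xt h) j
        + (v (h + 1)).mulVec (prev (h + 1)) j)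

/-- The hidden states `hiddenState L w v ψ x t h : Fin (L h) → ℝ` of the RNN:
`hiddenState L w v ψ x t 0 = x t` for `t ≥ 1`, `hiddenState L w v ψ x 0 h = 0`, and
`hiddenState L w v ψ x t h = ψ h (w h ⬝ z_t^{h-1} + v h ⬝ z_{t-1}^h)` for `t, h ≥ 1`. -/
noncomputable def hiddenState (L : ℕ → ℕ)
    (w : (h : ℕ) → Matrix (Fin (L h)) (Fin (L (h - 1))) ℝ)
    (v : (h : ℕ) → Matrix (Fin (L h)) (Fin (L h)) ℝ)
    (ψ : ℕ → ℝ → ℝ)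
    (x : ℕ → Fin (L 0) → ℝ) : ℕ → (h : ℕ) → Fin (L h) → ℝ
  | 0 => fun _ _ => 0
  | t + 1 => zLayer L w v ψ (hiddenState L w v ψ x t) (x (t + 1))

/-- The output of the `H`-layer RNN at time `t`: `O_t = w^H z_t^{H-1}`. -/
noncomputable def output (L : ℕ → ℕ) (H : ℕ)
    (w : (h : ℕ) → Matrix (Fin (L h)) (Fin (L (h - 1))) ℝ)
    (v : (h : ℕ) → Matrix (Fin (L h)) (Fin (L h)) ℝ)
    (ψ : ℕ → ℝ → ℝ)
    (x : ℕ → Fin (L 0) → ℝ) (t : ℕ) : Fin (L H) → ℝ :=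
  (w H).mulVec (hiddenState L w v ψ x t (H - 1))

lemma nnz_eq_card_filter {m n : Type*} [Fintype m] [Fintype n] [DecidableEq m] [DecidableEq n]
    (A : Matrix m n ℝ) : nnz A = #{p : m × n | A p.1 p.2 ≠ 0} := by
  rw [nnz, Nat.card_eq_fintype_card, Fintype.card_subtype]

lemma sum_abs_mulVec_le {m n : Type*} [Fintype m] [Fintype n] (A : Matrix m n ℝ)
    (z : n → ℝ) {E M : ℝ} (hE : 0 ≤ E) (hA : ∀ i j, |A i j| ≤ E) (hz : ∀ j, |z j| ≤ M) :
    ∑ i, |A.mulVec z i| ≤ nnz A * E * M := by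
  classical
  calc ∑ i, |A.mulVec z i| ≤ ∑ i, ∑ j, |A i j * z j| :=
        sum_le_sum fun i _ => abs_sum_le_sum_abs _ _
    _ = ∑ p ∈ {p : m × n | A p.1 p.2 ≠ 0}, |A p.1 p.2 * z p.2| := by
        rw [← Fintype.sum_prod_type', sum_filter_of_ne]
        intro p _ hp hA0
        simp [hA0] at hp
    _ ≤ #{p : m × n | A p.1 p.2 ≠ 0} • (E * M) :=
        sum_le_card_nsmul _ _ _ fun p _ => by
          rw [abs_mul]
          exact mul_le_mul (hA _ _) (hz _) (abs_nonneg _) hE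
    _ = nnz A * E * M := by rw [nnz_eq_card_filter, nsmul_eq_mul, mul_assoc]

lemma abs_mulVec_le {m n : Type*} [Fintype m] [Fintype n] (A : Matrix m n ℝ)
    (z : n → ℝ) {E M : ℝ} (hE : 0 ≤ E) (hA : ∀ i j, |A i j| ≤ E) (hz : ∀ j, |z j| ≤ M) (i : m) :
    |A.mulVec z i| ≤ nnz A * E * M :=
  (single_le_sum (f := fun i => |A.mulVec z i|) (fun _ _ => abs_nonneg _) (mem_univ i)).trans
    (sum_abs_mulVec_le A z hE hA hz)

lemma abs_le_abs_of_lipschitzWith_one {f : ℝ → ℝ} (hf : LipschitzWith 1 f) (hf0 : f 0 = 0)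
    (y : ℝ) : |f y| ≤ |y| := by
  simpa using hf.norm_le_mul hf0 y

lemma add_pow_le_succ_pow (t : ℝ) (ht : 0 ≤ t) (h : ℕ) :
    (t + 1) ^ h + t ^ (h + 1) ≤ (t + 1) ^ (h + 1) := by
  have : t ^ (h + 1) ≤ t * (t + 1) ^ h := by
    rw [pow_succ']; gcongr; linarith
  have : (t + 1) ^ (h + 1) = (t + 1) ^ h + t * (t + 1) ^ h := by ring
  linarith

noncomputable def rnnBound (a b : ℕ → ℕ) (E : ℝ) (t h : ℕ) : ℝ :=
  (t : ℝ) ^ h * (∏ k ∈ Icc 1 h, (a k : ℝ)) * (∏ k ∈ Icc 1 h, (b k : ℝ)) ^ (t - 1) * E ^ (t * h)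

section rnnBound

variable (a b : ℕ → ℕ) {E : ℝ}

lemma rnnBound_nonneg (hE : 0 ≤ E) (t h : ℕ) : 0 ≤ rnnBound a b E t h := by
  unfold rnnBound; positivity

lemma rnnBound_succ_zero (t : ℕ) : rnnBound a b E (t + 1) 0 = 1 := by
  simp [rnnBound]

lemma mul_rnnBound_lower_layer_le (t h : ℕ) (hb : 1 ≤ b (h + 1)) (hE : 1 ≤ E) :
    a (h + 1) * E * rnnBound a b E (t + 1) h ≤
      ((t : ℝ) + 1) ^ h * (∏ k ∈ Icc 1 (h + 1), (a k : ℝ)) * (∏ k ∈ Icc 1 (h + 1), (b k : ℝ)) ^ t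
        * E ^ ((t + 1) * (h + 1)) := by
  have hb' : (1 : ℝ) ≤ b (h + 1) := by exact_mod_cast hb
  rw [prod_Icc_succ_top (by omega), prod_Icc_succ_top (by omega)]
  calc a (h + 1) * E * rnnBound a b E (t + 1) h
      = ((t : ℝ) + 1) ^ h * ((∏ k ∈ Icc 1 h, (a k : ℝ)) * a (h + 1))
          * (∏ k ∈ Icc 1 h, (b k : ℝ)) ^ t * E ^ ((t + 1) * h + 1) := by
        simp only [rnnBound, Nat.add_sub_cancel, Nat.cast_succ, pow_succ]; ring
    _ ≤ _ := by
        gcongr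
        · exact le_mul_of_one_le_right (by positivity) hb'
        · nlinarith

lemma mul_rnnBound_prev_time_le (t h : ℕ) (hb : ∀ k ∈ Icc 1 h, 1 ≤ b k) (hE : 1 ≤ E) :
    b (h + 1) * E * rnnBound a b E t (h + 1) ≤
      (t : ℝ) ^ (h + 1) * (∏ k ∈ Icc 1 (h + 1), (a k : ℝ)) * (∏ k ∈ Icc 1 (h + 1), (b k : ℝ)) ^ t
        * E ^ ((t + 1) * (h + 1)) := by
  rcases t with _ | s
  · simp [rnnBound]
  have hB : ∏ k ∈ Icc 1 (h + 1), (b k : ℝ) = (∏ k ∈ Icc 1 h, (b k : ℝ)) * b (h + 1) :=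
    prod_Icc_succ_top (by omega) _
  have hB1 : (1 : ℝ) ≤ ∏ k ∈ Icc 1 h, (b k : ℝ) := one_le_prod fun k hk => by
    exact_mod_cast hb k hk
  calc b (h + 1) * E * rnnBound a b E (s + 1) (h + 1)
      = ((s + 1 : ℕ) : ℝ) ^ (h + 1) * (∏ k ∈ Icc 1 (h + 1), (a k : ℝ))
          * ((∏ k ∈ Icc 1 (h + 1), (b k : ℝ)) ^ s * b (h + 1)) * E ^ ((s + 1) * (h + 1) + 1) := by
        simp only [rnnBound, Nat.add_sub_cancel, pow_succ]; ring
    _ ≤ ((s + 1 : ℕ) : ℝ) ^ (h + 1) * (∏ k ∈ Icc 1 (h + 1), (a k : ℝ))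
          * ((∏ k ∈ Icc 1 (h + 1), (b k : ℝ)) ^ s * ∏ k ∈ Icc 1 (h + 1), (b k : ℝ))
          * E ^ ((s + 1 + 1) * (h + 1)) := by
        gcongr
        · rw [hB]; exact le_mul_of_one_le_left (by positivity) hB1
        · nlinarith
    _ = _ := by ring

lemma rnnBound_succ_succ_ge (t h : ℕ) (hb : ∀ k ∈ Icc 1 (h + 1), 1 ≤ b k) (hE : 1 ≤ E) :
    a (h + 1) * E * rnnBound a b E (t + 1) h + b (h + 1) * E * rnnBound a b E t (h + 1)
      ≤ rnnBound a b E (t + 1) (h + 1) := by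
  set C := (∏ k ∈ Icc 1 (h + 1), (a k : ℝ)) * (∏ k ∈ Icc 1 (h + 1), (b k : ℝ)) ^ t
    * E ^ ((t + 1) * (h + 1))
  have hlower := mul_rnnBound_lower_layer_le a b t h (hb (h + 1) (by simp)) hE
  have hprev := mul_rnnBound_prev_time_le a b t h
    (fun k hk => hb k (Icc_subset_Icc_right h.le_succ hk)) hE
  calc _ ≤ ((t : ℝ) + 1) ^ h * C + (t : ℝ) ^ (h + 1) * C := by
        simp only [C, ← mul_assoc]; exact add_le_add hlower hprev
    _ = (((t : ℝ) + 1) ^ h + (t : ℝ) ^ (h + 1)) * C := by ring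
    _ ≤ ((t : ℝ) + 1) ^ (h + 1) * C := by
        gcongr
        exact add_pow_le_succ_pow _ t.cast_nonneg h
    _ = rnnBound a b E (t + 1) (h + 1) := by
        simp only [rnnBound, C, Nat.add_sub_cancel, Nat.cast_succ]; ring

lemma mul_rnnBound_pred_le {H : ℕ} (hH : 2 ≤ H) (hE : 0 ≤ E) (t : ℕ) :
    a H * E * rnnBound a b E t (H - 1) ≤
      (t : ℝ) ^ H * (∏ k ∈ Icc 1 H, (a k : ℝ)) * (∏ k ∈ Icc 1 (H - 1), (b k : ℝ)) ^ (t - 1)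
        * E ^ (t * (H - 1) + 1) := by
  have hA : ∏ k ∈ Icc 1 H, (a k : ℝ) = (∏ k ∈ Icc 1 (H - 1), (a k : ℝ)) * a H := by
    conv_lhs => rw [← Nat.sub_add_cancel (by omega : 1 ≤ H), prod_Icc_succ_top (by omega),
      Nat.sub_add_cancel (by omega : 1 ≤ H)]
  have ht : (t : ℝ) ^ (H - 1) ≤ (t : ℝ) ^ H := by
    rcases t.eq_zero_or_pos with rfl | ht
    · simp [zero_pow (by omega : H - 1 ≠ 0)]
    · exact pow_le_pow_right₀ (by exact_mod_cast ht) (Nat.sub_le H 1)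
  calc a H * E * rnnBound a b E t (H - 1)
      = (t : ℝ) ^ (H - 1) * (∏ k ∈ Icc 1 H, (a k : ℝ))
          * (∏ k ∈ Icc 1 (H - 1), (b k : ℝ)) ^ (t - 1) * E ^ (t * (H - 1) + 1) := by
        rw [rnnBound, hA, pow_succ]; ring
    _ ≤ _ := by gcongr

end rnnBound

section hiddenState

variable (L : ℕ → ℕ) (w : (h : ℕ) → Matrix (Fin (L h)) (Fin (L (h - 1))) ℝ)
  (v : (h : ℕ) → Matrix (Fin (L h)) (Fin (L h)) ℝ) (ψ : ℕ → ℝ → ℝ) (x : ℕ → Fin (L 0) → ℝ)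

lemma hiddenState_succ_zero (t : ℕ) : hiddenState L w v ψ x (t + 1) 0 = x (t + 1) := rfl

lemma hiddenState_succ_succ (t h : ℕ) (j : Fin (L (h + 1))) :
    hiddenState L w v ψ x (t + 1) (h + 1) j =
      ψ (h + 1) ((w (h + 1)).mulVec (hiddenState L w v ψ x (t + 1) h) j
        + (v (h + 1)).mulVec (hiddenState L w v ψ x t (h + 1)) j) := rfl

lemma abs_hiddenState_le (N : ℕ) {E : ℝ} (hE : 1 ≤ E)
    (hψ : ∀ h, 1 ≤ h → h ≤ N → ∀ y, |ψ h y| ≤ |y|) (hx : ∀ s j, |x s j| ≤ 1)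
    (hwE : ∀ h, 1 ≤ h → h ≤ N → ∀ j k, |w h j k| ≤ E)
    (hvE : ∀ h, 1 ≤ h → h ≤ N → ∀ j k, |v h j k| ≤ E)
    (hvr : ∀ h, 1 ≤ h → h ≤ N → 1 ≤ nnz (v h)) (t h : ℕ) (hN : h ≤ N) (j : Fin (L h)) :
    |hiddenState L w v ψ x t h j| ≤
      rnnBound (fun k => nnz (w k)) (fun k => nnz (v k)) E t h := by
  have hE0 : 0 ≤ E := zero_le_one.trans hE
  induction t generalizing h with
  | zero => simpa [hiddenState] using rnnBound_nonneg _ _ hE0 0 h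
  | succ t iht =>
    induction h with
    | zero => simpa [hiddenState_succ_zero, rnnBound_succ_zero] using hx (t + 1) j
    | succ h ihh =>
      calc |hiddenState L w v ψ x (t + 1) (h + 1) j|
          ≤ |(w (h + 1)).mulVec (hiddenState L w v ψ x (t + 1) h) j|
              + |(v (h + 1)).mulVec (hiddenState L w v ψ x t (h + 1)) j| := by
            rw [hiddenState_succ_succ]
            exact (hψ (h + 1) (by omega) hN _).trans (abs_add_le _ _)
        _ ≤ nnz (w (h + 1)) * E * rnnBound (fun k => nnz (w k)) (fun k => nnz (v k)) E (t + 1) h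
              + nnz (v (h + 1)) * E *
                rnnBound (fun k => nnz (w k)) (fun k => nnz (v k)) E t (h + 1) := by
            refine add_le_add ?_ ?_
            · exact abs_mulVec_le _ _ hE0 (hwE (h + 1) (by omega) hN) (ihh (by omega)) j
            · exact abs_mulVec_le _ _ hE0 (hvE (h + 1) (by omega) hN) (iht (h + 1) hN) j
        _ ≤ rnnBound (fun k => nnz (w k)) (fun k => nnz (v k)) E (t + 1) (h + 1) :=
            rnnBound_succ_succ_ge (fun k => nnz (w k)) (fun k => nnz (v k)) t h
              (fun k hk => hvr k (mem_Icc.1 hk).1 ((mem_Icc.1 hk).2.trans hN)) hE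

end hiddenState

theorem output_l1_bound_general
    (H : ℕ) (hH : 2 ≤ H)
    (L : ℕ → ℕ)
    (w : (h : ℕ) → Matrix (Fin (L h)) (Fin (L (h - 1))) ℝ)
    (v : (h : ℕ) → Matrix (Fin (L h)) (Fin (L h)) ℝ)
    (ψ : ℕ → ℝ → ℝ)
    (hψ : ∀ h, 1 ≤ h → h ≤ H - 1 → LipschitzWith 1 (ψ h) ∧ ψ h 0 = 0)
    (x : ℕ → Fin (L 0) → ℝ) (hx : ∀ s j, |x s j| ≤ 1)
    (E : ℝ) (hE : 1 ≤ E)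
    (hwE : ∀ h, 1 ≤ h → h ≤ H → ∀ j k, |w h j k| ≤ E)
    (hvE : ∀ h, 1 ≤ h → h ≤ H - 1 → ∀ j k, |v h j k| ≤ E)
    (hvr : ∀ h, 1 ≤ h → h ≤ H - 1 → 1 ≤ nnz (v h))
    (t : ℕ) :
    ∑ j, |output L H w v ψ x t j| ≤
      (t : ℝ) ^ H * (∏ k ∈ Finset.Icc 1 H, (nnz (w k) : ℝ))
        * (∏ k ∈ Finset.Icc 1 (H - 1), (nnz (v k) : ℝ)) ^ (t - 1)
        * E ^ (t * (H - 1) + 1) := by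
  have hE0 : 0 ≤ E := zero_le_one.trans hE
  have hidden := abs_hiddenState_le L w v ψ x (H - 1) hE
    (fun h h1 h2 => abs_le_abs_of_lipschitzWith_one (hψ h h1 h2).1 (hψ h h1 h2).2) hx
    (fun h h1 h2 => hwE h h1 (h2.trans (Nat.sub_le H 1))) hvE hvr t (H - 1) le_rfl
  calc ∑ j, |output L H w v ψ x t j|
      ≤ nnz (w H) * E * rnnBound (fun k => nnz (w k)) (fun k => nnz (v k)) E t (H - 1) :=
        sum_abs_mulVec_le _ _ hE0 (hwE H (by omega) le_rfl) hidden
    _ ≤ _ := mul_rnnBound_pred_le (fun k => nnz (w k)) (fun k => nnz (v k)) hH hE0 t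

/-- Lemma S (sparse RNN output ℓ¹ bound): for every time `t ≥ 1`,
`∑_j |O_t(j)| ≤ t^H (∏_{k=1}^H r_{w_k}) (∏_{k=1}^{H-1} r_{v_k})^{t-1} E^{t(H-1)+1}`. -/
theorem output_l1_bound
    (H : ℕ) (hH : 2 ≤ H)
    (L : ℕ → ℕ) (hL : ∀ h ≤ H, 1 ≤ L h)
    (w : (h : ℕ) → Matrix (Fin (L h)) (Fin (L (h - 1))) ℝ)
    (v : (h : ℕ) → Matrix (Fin (L h)) (Fin (L h)) ℝ)
    (ψ : ℕ → ℝ → ℝ)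
    (hψ : ∀ h, 1 ≤ h → h ≤ H - 1 → LipschitzWith 1 (ψ h) ∧ ψ h 0 = 0)
    (x : ℕ → Fin (L 0) → ℝ) (hx : ∀ s j, |x s j| ≤ 1)
    (E : ℝ) (hE : 1 ≤ E)
    (hwE : ∀ h, 1 ≤ h → h ≤ H → ∀ j k, |w h j k| ≤ E)
    (hvE : ∀ h, 1 ≤ h → h ≤ H - 1 → ∀ j k, |v h j k| ≤ E)
    (hwr : ∀ h, 1 ≤ h → h ≤ H → 1 ≤ nnz (w h))
    (hvr : ∀ h, 1 ≤ h → h ≤ H - 1 → 1 ≤ nnz (v h))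
    (t : ℕ) (ht : 1 ≤ t) :
    ∑ j, |output L H w v ψ x t j| ≤
      (t : ℝ) ^ H * (∏ k ∈ Finset.Icc 1 H, (nnz (w k) : ℝ))
        * (∏ k ∈ Finset.Icc 1 (H - 1), (nnz (v k) : ℝ)) ^ (t - 1)
        * E ^ (t * (H - 1) + 1) :=
  output_l1_bound_general H hH L w v ψ hψ x hx E hE hwE hvE hvr t
end

section
/- Let H ≥ 2 be an integer, E ≥ 1 a real number, and rw_1, …, rw_{H−1}, rv_1, …, rv_{H−1} real numbers each ≥ 1. Suppose O(t,i) ≥ 0 is defined for all integers t ≥ 1 and 1 ≤ i ≤ H−1 and satisfies: O(1,i) ≤ E^i · Π_{k=1}^{i} rw_k for all 1 ≤ i ≤ H−1; O(t,1) ≤ E·rw_1 + E·rv_1·O(t−1,1) for all t ≥ 2; and O(t,i) ≤ E·rw_i·O(t,i−1) + E·rv_i·O(t−1,i) for all t ≥ 2 and 2 ≤ i ≤ H−1. Then O(t,i) ≤ t^i · (Π_{k=1}^{i} rw_k) · (Π_{k=1}^{i} rv_k)^{t−1} · E^{t·i} for all t ≥ 1 and 1 ≤ i ≤ H−1. -/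
/-!
Write `B(t, i)` for the claimed bound and set `O(t, 0) := 1 = B(t, 0)`. Induct on `t`, and for
fixed `t + 1` on `i`: the recurrence bounds `O(t+1, i)` by `E rw_i B(t+1, i-1) + E rv_i B(t, i)`.
Since all factors are at least `1`, each summand is at most `B(t+1, i) / (t+1)^i` times
`(t+1)^(i-1)` resp. `t^i`, and `(t+1)^(i-1) + t^i ≤ (t+1)^i`.
-/

open Finset

noncomputable def recurrenceBound (E : ℝ) (rw rv : ℕ → ℝ) (t i : ℕ) : ℝ :=
  (t : ℝ) ^ i * (∏ k ∈ Icc 1 i, rw k) * (∏ k ∈ Icc 1 i, rv k) ^ (t - 1) * E ^ (t * i)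

theorem add_one_pow_add_pow_succ_le {x : ℝ} (hx : 0 ≤ x) (j : ℕ) :
    (x + 1) ^ j + x ^ (j + 1) ≤ (x + 1) ^ (j + 1) := by
  have : x ^ j ≤ (x + 1) ^ j := by gcongr; linarith
  rw [pow_succ, pow_succ]
  nlinarith

namespace recurrenceBound

variable {E : ℝ} {rw rv : ℕ → ℝ}

@[simp]
theorem zero_right (t : ℕ) : recurrenceBound E rw rv t 0 = 1 := by
  simp [recurrenceBound]

@[simp]
theorem one_left (i : ℕ) : recurrenceBound E rw rv 1 i = E ^ i * ∏ k ∈ Icc 1 i, rw k := by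
  simp [recurrenceBound, mul_comm]

theorem step (hE : 1 ≤ E) {t j : ℕ} (ht : 1 ≤ t)
    (hrw : ∀ k ∈ Icc 1 (j + 1), 0 ≤ rw k) (hrv : ∀ k ∈ Icc 1 (j + 1), 1 ≤ rv k) :
    E * rw (j + 1) * recurrenceBound E rw rv (t + 1) j
      + E * rv (j + 1) * recurrenceBound E rw rv t (j + 1)
      ≤ recurrenceBound E rw rv (t + 1) (j + 1) := by
  obtain ⟨s, rfl⟩ : ∃ s, t = s + 1 := ⟨t - 1, by omega⟩
  have hsub : Icc 1 j ⊆ Icc 1 (j + 1) := Icc_subset_Icc_right (Nat.le_succ j)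
  set W := ∏ k ∈ Icc 1 j, rw k
  set V := ∏ k ∈ Icc 1 j, rv k
  have hW : 0 ≤ W := prod_nonneg fun k hk ↦ hrw k (hsub hk)
  have hV : 1 ≤ V := one_le_prod fun k hk ↦ hrv k (hsub hk)
  have ha : 0 ≤ rw (j + 1) := hrw (j + 1) (by simp)
  have hb : 1 ≤ rv (j + 1) := hrv (j + 1) (by simp)
  have hVb : V ≤ V * rv (j + 1) := le_mul_of_one_le_right (by linarith) hb
  have hbV : rv (j + 1) ≤ V * rv (j + 1) := le_mul_of_one_le_left (by linarith) hV
  set C := W * rw (j + 1) * (V * rv (j + 1)) ^ (s + 1) * E ^ ((s + 2) * (j + 1))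
  have hfirst : E * rw (j + 1) * recurrenceBound E rw rv (s + 2) j ≤ ((s : ℝ) + 2) ^ j * C := by
    calc _ = ((s : ℝ) + 2) ^ j * W * rw (j + 1) * V ^ (s + 1) * E ^ ((s + 2) * j + 1) := by
          simp only [recurrenceBound]; push_cast; ring
      _ ≤ ((s : ℝ) + 2) ^ j * W * rw (j + 1) * (V * rv (j + 1)) ^ (s + 1)
            * E ^ ((s + 2) * (j + 1)) := by
          gcongr
          ring_nf; omega
      _ = _ := by ring
  have hsecond : E * rv (j + 1) * recurrenceBound E rw rv (s + 1) (j + 1)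
      ≤ ((s : ℝ) + 1) ^ (j + 1) * C := by
    calc _ = ((s : ℝ) + 1) ^ (j + 1) * W * rw (j + 1) * (rv (j + 1) * (V * rv (j + 1)) ^ s)
            * E ^ ((s + 1) * (j + 1) + 1) := by
          simp only [recurrenceBound, prod_Icc_succ_top (Nat.le_add_left 1 j)]; push_cast; ring
      _ ≤ ((s : ℝ) + 1) ^ (j + 1) * W * rw (j + 1) * ((V * rv (j + 1)) * (V * rv (j + 1)) ^ s)
            * E ^ ((s + 2) * (j + 1)) := by
          gcongr
          ring_nf; omega
      _ = _ := by rw [← pow_succ']; ring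
  calc _ ≤ ((s : ℝ) + 2) ^ j * C + ((s : ℝ) + 1) ^ (j + 1) * C := add_le_add hfirst hsecond
    _ ≤ ((s : ℝ) + 2) ^ (j + 1) * C := by
          rw [← add_mul]
          gcongr
          have := add_one_pow_add_pow_succ_le (by positivity : (0 : ℝ) ≤ s + 1) j
          rw [add_assoc, one_add_one_eq_two] at this
          linarith
    _ = _ := by
          simp only [recurrenceBound, C, W, V, prod_Icc_succ_top (Nat.le_add_left 1 j)]
          push_cast; ring

end recurrenceBound

theorem le_recurrenceBound {E : ℝ} {rw rv : ℕ → ℝ} {n : ℕ} (hE : 1 ≤ E)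
    (hrw : ∀ k ∈ Icc 1 n, 0 ≤ rw k) (hrv : ∀ k ∈ Icc 1 n, 1 ≤ rv k)
    {O : ℕ → ℕ → ℝ} (h0 : ∀ t, O t 0 ≤ 1)
    (h1 : ∀ i ≤ n, O 1 i ≤ E ^ i * ∏ k ∈ Icc 1 i, rw k)
    (hrec : ∀ t j, 1 ≤ t → j + 1 ≤ n →
      O (t + 1) (j + 1) ≤ E * rw (j + 1) * O (t + 1) j + E * rv (j + 1) * O t (j + 1)) :
    ∀ t i, 1 ≤ t → i ≤ n → O t i ≤ recurrenceBound E rw rv t i := by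
  intro t i ht
  induction t, ht using Nat.le_induction generalizing i with
  | base => simpa using h1 i
  | succ t ht iht =>
    intro hi
    induction i with
    | zero => simpa using h0 (t + 1)
    | succ j ihj =>
      have hIcc : Icc 1 (j + 1) ⊆ Icc 1 n := Icc_subset_Icc_right hi
      have hj : j + 1 ∈ Icc 1 n := hIcc (by simp)
      calc O (t + 1) (j + 1)
          ≤ E * rw (j + 1) * O (t + 1) j + E * rv (j + 1) * O t (j + 1) := hrec t j ht hi
        _ ≤ E * rw (j + 1) * recurrenceBound E rw rv (t + 1) j
              + E * rv (j + 1) * recurrenceBound E rw rv t (j + 1) := by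
            have hrw_j := hrw (j + 1) hj
            have hrv_j := hrv (j + 1) hj
            gcongr
            exacts [ihj (by omega), iht (j + 1) hi]
        _ ≤ recurrenceBound E rw rv (t + 1) (j + 1) :=
            recurrenceBound.step hE ht (fun k hk ↦ hrw k (hIcc hk)) (fun k hk ↦ hrv k (hIcc hk))

theorem recurrence_bound_general
    (H : ℕ) (E : ℝ) (hE : 1 ≤ E)
    (rw rv : ℕ → ℝ)
    (hrw : ∀ k, 1 ≤ k → k ≤ H - 1 → 1 ≤ rw k)
    (hrv : ∀ k, 1 ≤ k → k ≤ H - 1 → 1 ≤ rv k)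
    (O : ℕ → ℕ → ℝ)
    (h1 : ∀ i, 1 ≤ i → i ≤ H - 1 → O 1 i ≤ E ^ i * ∏ k ∈ Finset.Icc 1 i, rw k)
    (h2 : ∀ t, 2 ≤ t → O t 1 ≤ E * rw 1 + E * rv 1 * O (t - 1) 1)
    (h3 : ∀ t i, 2 ≤ t → 2 ≤ i → i ≤ H - 1 →
      O t i ≤ E * rw i * O t (i - 1) + E * rv i * O (t - 1) i) :
    ∀ t i, 1 ≤ t → 1 ≤ i → i ≤ H - 1 →
      O t i ≤ (t : ℝ) ^ i * (∏ k ∈ Finset.Icc 1 i, rw k)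
        * (∏ k ∈ Finset.Icc 1 i, rv k) ^ (t - 1) * E ^ (t * i) := by
  intro t i ht hi hiH
  -- With `O(t, 0) := 1`, the recurrence `h2` becomes the case `i = 1` of `h3`.
  let O' : ℕ → ℕ → ℝ := fun t i ↦ if i = 0 then 1 else O t i
  have h1' : ∀ i ≤ H - 1, O' 1 i ≤ E ^ i * ∏ k ∈ Icc 1 i, rw k := by
    rintro (_ | i) hi
    · simp [O']
    · simpa [O'] using h1 (i + 1) (by omega) hi
  have hrec' : ∀ t j, 1 ≤ t → j + 1 ≤ H - 1 →
      O' (t + 1) (j + 1) ≤ E * rw (j + 1) * O' (t + 1) j + E * rv (j + 1) * O' t (j + 1) := by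
    rintro t (_ | j) ht hj
    · simpa [O'] using h2 (t + 1) (by omega)
    · simpa [O'] using h3 (t + 1) (j + 2) (by omega) (by omega) hj
  have := le_recurrenceBound hE
    (fun k hk ↦ zero_le_one.trans (hrw k (mem_Icc.1 hk).1 (mem_Icc.1 hk).2))
    (fun k hk ↦ hrv k (mem_Icc.1 hk).1 (mem_Icc.1 hk).2) (fun t ↦ by simp [O']) h1' hrec' t i ht hiH
  simpa [O', recurrenceBound, Nat.pos_iff_ne_zero.mp hi] using this

/-- If the nonnegative family `O(t,i)` (for `t ≥ 1`, `1 ≤ i ≤ H-1`) satisfies the recursive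
bounds `O(1,i) ≤ E^i ∏_{k=1}^i rw_k`, `O(t,1) ≤ E rw_1 + E rv_1 O(t-1,1)` for `t ≥ 2`, and
`O(t,i) ≤ E rw_i O(t,i-1) + E rv_i O(t-1,i)` for `t ≥ 2`, `2 ≤ i ≤ H-1`, then
`O(t,i) ≤ t^i (∏_{k=1}^i rw_k) (∏_{k=1}^i rv_k)^{t-1} E^{t i}` for all `t ≥ 1`,
`1 ≤ i ≤ H-1`. -/
theorem recurrence_bound
    (H : ℕ) (hH : 2 ≤ H) (E : ℝ) (hE : 1 ≤ E)
    (rw rv : ℕ → ℝ)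
    (hrw : ∀ k, 1 ≤ k → k ≤ H - 1 → 1 ≤ rw k)
    (hrv : ∀ k, 1 ≤ k → k ≤ H - 1 → 1 ≤ rv k)
    (O : ℕ → ℕ → ℝ)
    (hO : ∀ t i, 1 ≤ t → 1 ≤ i → i ≤ H - 1 → 0 ≤ O t i)
    (h1 : ∀ i, 1 ≤ i → i ≤ H - 1 → O 1 i ≤ E ^ i * ∏ k ∈ Finset.Icc 1 i, rw k)
    (h2 : ∀ t, 2 ≤ t → O t 1 ≤ E * rw 1 + E * rv 1 * O (t - 1) 1)
    (h3 : ∀ t i, 2 ≤ t → 2 ≤ i → i ≤ H - 1 →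
      O t i ≤ E * rw i * O t (i - 1) + E * rv i * O (t - 1) i) :
    ∀ t i, 1 ≤ t → 1 ≤ i → i ≤ H - 1 →
      O t i ≤ (t : ℝ) ^ i * (∏ k ∈ Finset.Icc 1 i, rw k)
        * (∏ k ∈ Finset.Icc 1 i, rv k) ^ (t - 1) * E ^ (t * i) :=
  recurrence_bound_general H E hE rw rv hrw hrv O h1 h2 h3
end
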